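/- arXiv:1305.1892 — 2 statements merged into one kernel-verified Lean document; each statement's English description precedes it below -/
import Mathlib

section
/- With hypergeometric Bernoulli polynomials defined by Σ_{n≥0} B_n^{(a,b)}(x) z^n/n! = e^{xz}/Φ_{a,b}(z), the symmetry B_n^{(a,b)}(1−x) = (−1)^n B_n^{(b,a)}(x) holds for all n ≥ 0 and all x. -/
/-!
Substituting `-z` in `Σ B_n^{(b,a)}(x) zⁿ/n! = e^{xz}/Φ_{b,a}(z)` and multiplying numerator and
denominator by `e^z` turns it, by Kummer's transformation `e^z Φ_{b,a}(-z) = Φ_{a,b}(z)`, into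
`e^{(1-x)z}/Φ_{a,b}(z)`, the generating function of `B_n^{(a,b)}(1-x)`. Coefficientwise, Kummer's
transformation is the Chu–Vandermonde identity, which follows from the Vandermonde convolution
for falling factorials.
-/

open PowerSeries

/-- The formal power series of the Kummer function `Φ_{a,b}(z) = ₁F₁(a; a+b; z)`. -/
noncomputable def PhiSeries (a b : ℝ) : PowerSeries ℝ :=
  PowerSeries.mk fun k =>
    (∏ j ∈ Finset.range k, (a + j)) / (∏ j ∈ Finset.range k, (a + b + j)) /
      (k.factorial : ℝ)

open Finset

section Pochhammer

open Polynomial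

variable {R : Type*} [CommRing R]

theorem descPochhammer_smeval_eq_prod_range (k : ℕ) (r : R) :
    (descPochhammer ℤ k).smeval r = ∏ j ∈ range k, (r - j) := by
  rw [← aeval_eq_smeval, aeval_def, ← eval_map, descPochhammer_map,
    descPochhammer_eval_eq_prod_range]

theorem prod_range_add_natCast_eq_prod_range_sub (x : R) (m : ℕ) :
    ∏ j ∈ range m, (x + j) = ∏ j ∈ range m, (x + m - 1 - j) := by
  rw [← prod_range_reflect]
  refine prod_congr rfl fun j hj => ?_
  rw [Nat.cast_sub (by simp at hj; omega), Nat.cast_sub (by simp at hj; omega)]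
  push_cast
  ring

theorem prod_range_sub_add_eq_sum (r s : R) (n : ℕ) :
    ∏ j ∈ range n, (r + s - j) = ∑ p ∈ antidiagonal n,
      n.choose p.1 * ((∏ j ∈ range p.1, (r - j)) * ∏ j ∈ range p.2, (s - j)) := by
  simpa only [descPochhammer_smeval_eq_prod_range] using
    Ring.descPochhammer_smeval_add n (Commute.all r s)

theorem prod_range_neg_sub (b : R) (k : ℕ) :
    ∏ j ∈ range k, (-b - j) = (-1) ^ k * ∏ j ∈ range k, (b + j) := by
  simpa only [card_range, neg_add, ← sub_eq_add_neg] using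
    prod_neg (s := range k) fun j : ℕ => b + j

/-- The Chu–Vandermonde identity `₂F₁(-n, b; c; 1) = (c - b)_n / (c)_n`, cleared of
denominators: it is the Vandermonde convolution of falling factorials at `c + n - 1` and `-b`. -/
theorem sum_antidiagonal_choose_mul_prod_mul_neg_one_pow (b c : R) (n : ℕ) :
    ∑ p ∈ antidiagonal n, n.choose p.1 * ((∏ j ∈ range p.1, (c + p.2 + j)) *
      ((-1) ^ p.2 * ∏ j ∈ range p.2, (b + j))) = ∏ j ∈ range n, (c - b + j) := by
  rw [prod_range_add_natCast_eq_prod_range_sub,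
    show c - b + n - 1 = (c + n - 1) + -b by ring, prod_range_sub_add_eq_sum]
  refine sum_congr rfl fun p hp => ?_
  have hc : ∏ j ∈ range p.1, (c + p.2 + j) = ∏ j ∈ range p.1, (c + n - 1 - j) := by
    rw [prod_range_add_natCast_eq_prod_range_sub, ← mem_antidiagonal.1 hp]
    push_cast
    ring_nf
  rw [hc, prod_range_neg_sub]

end Pochhammer

theorem exp_mul_rescale_neg_one_PhiSeries (a b : ℝ) (hc : ∀ j : ℕ, a + b + j ≠ 0) :
    exp ℝ * rescale (-1) (PhiSeries b a) = PhiSeries a b := by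
  ext n
  have hterm : ∀ p ∈ antidiagonal n,
      coeff p.1 (exp ℝ) * coeff p.2 (rescale (-1) (PhiSeries b a)) =
      n.choose p.1 * ((∏ j ∈ range p.1, (a + b + p.2 + j)) *
        ((-1) ^ p.2 * ∏ j ∈ range p.2, (b + j))) /
        ((∏ j ∈ range n, (a + b + j)) * n.factorial) := by
    rintro ⟨i, k⟩ hp
    rw [HasAntidiagonal.mem_antidiagonal] at hp
    subst hp
    have hk : ∏ j ∈ range k, (a + b + j) ≠ 0 := prod_ne_zero_iff.2 fun j _ => hc j
    have hi : ∏ j ∈ range i, (a + b + k + j) ≠ 0 := prod_ne_zero_iff.2 fun j _ => by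
      simpa only [Nat.cast_add, add_assoc] using hc (k + j)
    have hchoose : ((k + i).choose i : ℝ) ≠ 0 := by
      exact_mod_cast (Nat.choose_pos (Nat.le_add_left i k)).ne'
    simp only [coeff_exp, coeff_rescale, PhiSeries, coeff_mk, add_comm b a]
    rw [add_comm i k, prod_range_add, ← Nat.add_choose_mul_factorial_mul_factorial k i]
    push_cast [← add_assoc]
    field_simp
  rw [coeff_mul, sum_congr rfl hterm, ← sum_div, sum_antidiagonal_choose_mul_prod_mul_neg_one_pow,
    PhiSeries, coeff_mk, add_sub_cancel_right, div_div]

theorem constantCoeff_PhiSeries (a b : ℝ) : constantCoeff (PhiSeries a b) = 1 := by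
  simp [PhiSeries, ← coeff_zero_eq_constantCoeff_apply]

theorem PhiSeries_ne_zero (a b : ℝ) : PhiSeries a b ≠ 0 := fun h => by
  simpa [h] using constantCoeff_PhiSeries a b

theorem mk_pow_div_factorial_eq_rescale_exp {K : Type*} [Field K] [CharZero K] (y : K) :
    mk (fun n => y ^ n / n.factorial) = rescale y (exp K) := by
  ext n
  simp [coeff_rescale, coeff_exp, div_eq_mul_inv]

/-- `Bab n` and `Bba n` stand for `B_n^{(a,b)}(1 - x)` and `B_n^{(b,a)}(x)`, given through their
generating functions `e^{(1-x)z}/Φ_{a,b}(z)` and `e^{xz}/Φ_{b,a}(z)`. -/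
theorem stmt_10 (a b : ℝ) (ha : 0 < a) (hb : 0 < b) (x : ℝ) (Bab Bba : ℕ → ℝ)
    (hab : PowerSeries.mk (fun n => Bab n / n.factorial) * PhiSeries a b =
           PowerSeries.mk (fun n => (1 - x) ^ n / n.factorial))
    (hba : PowerSeries.mk (fun n => Bba n / n.factorial) * PhiSeries b a =
           PowerSeries.mk (fun n => x ^ n / n.factorial)) :
    ∀ n : ℕ, Bab n = (-1 : ℝ) ^ n * Bba n := by
  have hkummer := exp_mul_rescale_neg_one_PhiSeries a b fun j => by positivity
  have hneg : mk (fun n => (-1) ^ n * Bba n / n.factorial) * PhiSeries a b =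
      mk (fun n => (1 - x) ^ n / n.factorial) :=
    calc _ = exp ℝ * rescale (-1) (mk (fun n => Bba n / n.factorial) * PhiSeries b a) := by
          rw [← hkummer, map_mul, rescale_mk]
          simp only [mul_div_assoc]
          ring
      _ = exp ℝ * rescale (-1) (rescale x (exp ℝ)) := by
          rw [hba, mk_pow_div_factorial_eq_rescale_exp]
      _ = _ := by
          rw [rescale_rescale, mul_neg_one, mk_pow_div_factorial_eq_rescale_exp, sub_eq_add_neg,
            ← exp_mul_exp_eq_exp_add, rescale_one, RingHom.id_apply]
  intro n
  have hcoeff :=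
    congrArg (coeff n) (mul_right_cancel₀ (PhiSeries_ne_zero a b) (hab.trans hneg.symm))
  have hfact : (n.factorial : ℝ) ≠ 0 := by positivity
  simpa only [coeff_mk, div_left_inj' hfact] using hcoeff
end

section
/- Define coefficients c_k by the formal power series identity Φ_{a,b+1}(z)/Φ_{a,b}(z) = 1 + ((a+b)/b) Σ_{k≥1} c_{k+1} z^k (so c_{k+1} = (b/(a+b)) × the k-th Taylor coefficient of the quotient). Then for every p ≥ 1: Σ_{ℓ=1}^{p} B(a+p−ℓ, b) · (p!/(p−ℓ)!) · c_{ℓ+1} = −(b p/((a+b)(a+b+p))) B(a+p, b), where B(u,v) = Γ(u)Γ(v)/Γ(u+v). -/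
open PowerSeries

/-- The Beta function `B(u,v) = Γ(u)Γ(v)/Γ(u+v)`. -/
noncomputable def Beta (u v : ℝ) : ℝ := Real.Gamma u * Real.Gamma v / Real.Gamma (u + v)

/-!
Comparing the coefficients of `z^p` in `f · Φ_{a,b} = Φ_{a,b+1}` and using `f₀ = 1` gives
`∑_{ℓ=1}^p f_ℓ [z^{p-ℓ}]Φ_{a,b} = [z^p]Φ_{a,b+1} - [z^p]Φ_{a,b}`. Since
`B(a+k,b) = B(a,b) k! [z^k]Φ_{a,b}`, multiplying by `B(a,b) p!` turns the left side into the
sum of the theorem, and `[z^p]Φ_{a,b+1} = (a+b)/(a+b+p) · [z^p]Φ_{a,b}` evaluates the right side.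
-/

lemma PowerSeries.sum_Icc_coeff_mul_coeff_eq_sub {R : Type*} [CommRing R]
    {f g h : PowerSeries R} (hfgh : f * g = h) (hf : coeff 0 f = 1) (p : ℕ) :
    ∑ ℓ ∈ Finset.Icc 1 p, coeff ℓ f * coeff (p - ℓ) g = coeff p h - coeff p g := by
  rw [← hfgh, coeff_mul,
    Finset.Nat.sum_antidiagonal_eq_sum_range_succ (fun i j => coeff i f * coeff j g),
    Finset.range_eq_Ico, Finset.sum_eq_sum_Ico_succ_bot p.succ_pos, hf, one_mul, Nat.sub_zero,
    zero_add, Nat.succ_eq_add_one, Finset.Ico_add_one_right_eq_Icc, add_sub_cancel_left]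

lemma Finset.prod_range_add_one_mul {R : Type*} [CommSemiring R] (x : R) (p : ℕ) :
    (∏ j ∈ Finset.range p, (x + 1 + j)) * x = (∏ j ∈ Finset.range p, (x + j)) * (x + p) := by
  have h := (Finset.prod_range_succ' (fun j : ℕ => x + j) p).symm.trans
    (Finset.prod_range_succ (fun j : ℕ => x + j) p)
  simpa only [Nat.cast_add, Nat.cast_one, Nat.cast_zero, add_zero, add_assoc, add_comm (1 : R)]
    using h

lemma Real.Gamma_add_nat_eq_prod_mul {x : ℝ} (hx : 0 < x) (k : ℕ) :
    Real.Gamma (x + k) = (∏ j ∈ Finset.range k, (x + j)) * Real.Gamma x := by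
  induction k with
  | zero => simp
  | succ n ih =>
    rw [Nat.cast_succ, ← add_assoc, Real.Gamma_add_one (by positivity), ih,
      Finset.prod_range_succ]
    ring

lemma Beta_add_nat {a b : ℝ} (ha : 0 < a) (hab : 0 < a + b) (k : ℕ) :
    Beta (a + k) b =
      (∏ j ∈ Finset.range k, (a + j)) / (∏ j ∈ Finset.range k, (a + b + j)) * Beta a b := by
  rw [Beta, Beta, add_right_comm, Real.Gamma_add_nat_eq_prod_mul ha,
    Real.Gamma_add_nat_eq_prod_mul hab, mul_assoc, mul_div_mul_comm]

lemma coeff_PhiSeries (a b : ℝ) (k : ℕ) :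
    coeff k (PhiSeries a b) =
      (∏ j ∈ Finset.range k, (a + j)) / (∏ j ∈ Finset.range k, (a + b + j)) / k.factorial :=
  coeff_mk _ _

lemma coeff_zero_PhiSeries (a b : ℝ) : coeff 0 (PhiSeries a b) = 1 := by
  simp [coeff_PhiSeries]

lemma Beta_add_nat_eq_mul_coeff_PhiSeries {a b : ℝ} (ha : 0 < a) (hab : 0 < a + b) (k : ℕ) :
    Beta (a + k) b = Beta a b * k.factorial * coeff k (PhiSeries a b) := by
  rw [Beta_add_nat ha hab, coeff_PhiSeries]
  field_simp

lemma coeff_PhiSeries_add_one {a b : ℝ} (hab : 0 < a + b) (p : ℕ) :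
    coeff p (PhiSeries a (b + 1)) = (a + b) / (a + b + p) * coeff p (PhiSeries a b) := by
  have hshift : ∏ j ∈ Finset.range p, (a + b + 1 + j) =
      (∏ j ∈ Finset.range p, (a + b + j)) * (a + b + p) / (a + b) := by
    rw [eq_div_iff hab.ne', Finset.prod_range_add_one_mul]
  rw [coeff_PhiSeries, coeff_PhiSeries, ← add_assoc, hshift]
  field_simp

/-- Linear recurrence for the coefficients `c_{k+1} = (b/(a+b)) · [z^k](Φ_{a,b+1}/Φ_{a,b})`,
i.e. for the hypergeometric zeta values `ζ_{a,b}^H(k+1)`. -/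
theorem stmt_18 (a b : ℝ) (ha : 0 < a) (hb : 0 < b) (f : PowerSeries ℝ) (c : ℕ → ℝ)
    (hf : f * PhiSeries a b = PhiSeries a (b + 1))
    (hc : ∀ k : ℕ, 1 ≤ k → c (k + 1) = b / (a + b) * PowerSeries.coeff k f) :
    ∀ p : ℕ, 1 ≤ p →
      ∑ ℓ ∈ Finset.Icc 1 p,
          Beta (a + p - ℓ) b * ((p.factorial : ℝ) / ((p - ℓ).factorial : ℝ)) * c (ℓ + 1) =
        -(b * p / ((a + b) * (a + b + p))) * Beta (a + p) b := by
  intro p _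
  have hab : 0 < a + b := by positivity
  have hf₀ : coeff 0 f = 1 := by
    simpa [coeff_mul, coeff_zero_PhiSeries] using congrArg (coeff 0) hf
  have hterm : ∀ ℓ ∈ Finset.Icc 1 p,
      Beta (a + p - ℓ) b * ((p.factorial : ℝ) / ((p - ℓ).factorial : ℝ)) * c (ℓ + 1) =
        b / (a + b) * Beta a b * p.factorial * (coeff ℓ f * coeff (p - ℓ) (PhiSeries a b)) := by
    intro ℓ hℓ
    obtain ⟨hℓ₁, hℓp⟩ := Finset.mem_Icc.mp hℓ
    obtain ⟨m, rfl⟩ : ∃ m, p = m + ℓ := ⟨p - ℓ, by omega⟩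
    rw [Nat.add_sub_cancel, show a + ↑(m + ℓ) - ↑ℓ = a + ↑m by push_cast; ring,
      Beta_add_nat_eq_mul_coeff_PhiSeries ha hab, hc ℓ hℓ₁]
    field_simp
  rw [Finset.sum_congr rfl hterm, ← Finset.mul_sum,
    PowerSeries.sum_Icc_coeff_mul_coeff_eq_sub hf hf₀, coeff_PhiSeries_add_one hab,
    Beta_add_nat_eq_mul_coeff_PhiSeries ha hab]
  field_simp
  ring
end
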